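/- Under the cocycle condition t(fᵢⱼₖ)·gᵢₖ = gᵢⱼ·gⱼₖ on overlaps, the combination λᵢⱼₖₗ := fᵢₖₗ⁻¹ · fᵢⱼₖ⁻¹ · α(gᵢⱼ)(fⱼₖₗ) · fᵢⱼₗ takes values in ker t. -/
import Mathlib


/-- Under the cocycle condition `t(f_{ijk}) g_{ik} = g_{ij} g_{jk}`, the twist
`λ_{ijkl} = f_{ikl}⁻¹ f_{ijk}⁻¹ α(g_{ij})(f_{jkl}) f_{ijl}` takes values in
`ker t`. -/
theorem crossedModule_twist_in_ker
    {G H : Type*} [Group G] [Group H]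
    (t : H →* G) (α : G →* MulAut H)
    (equivariance : ∀ (g : G) (h : H), t (α g h) = g * t h * g⁻¹)
    (peiffer : ∀ h h' : H, α (t h) h' = h * h' * h⁻¹)
    {ι X : Type*}
    (g : ι → ι → X → G) (f : ι → ι → ι → X → H)
    (cocycle : ∀ (i j k : ι) (x : X),
      t (f i j k x) * g i k x = g i j x * g j k x) :
    ∀ (i j k l : ι) (x : X),
      t ((f i k l x)⁻¹ * (f i j k x)⁻¹ * α (g i j x) (f j k l x) * f i j l x)
        = 1 := by
  intro i j k l x
  have tf : ∀ (a b c : ι), t (f a b c x) = g a b x * g b c x * (g a c x)⁻¹ := by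
    intro a b c
    rw [eq_mul_inv_iff_mul_eq, cocycle a b c x]
  simp only [map_mul, map_inv, equivariance, tf]
  group
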